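/- arXiv:2304.11508 — 3 statements merged into one kernel-verified Lean document; each statement's English description precedes it below -/
import Mathlib

section
/- The subring QSym_{2,(x)}(ℂ[x]) of ℂ[x₁,x₂] (the quasisymmetric polynomials in two variables) is generated as a ℂ-algebra by the three elements x₁x₂, x₁+x₂, and x₁²x₂. -/
/-!
Since `x₁` and `x₂` are the roots of `t² - (x₁ + x₂) t + x₁x₂`, both the power sums
`x₁ⁿ + x₂ⁿ = M_(n)` and `x₁ⁿ⁺¹x₂` satisfy a two-step recurrence with coefficients in the
algebra generated by `x₁x₂`, `x₁ + x₂`, `x₁²x₂`. With `x₁x₂ⁿ⁺¹ = x₁x₂ M_(n) - x₁ⁿ⁺¹x₂`,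
multiplying by powers of `x₁x₂` then reaches every `M_(a,b) = x₁ᵃx₂ᵇ`. Conversely the span of
the `M_α` is closed under multiplication: a product involving some `M_(a,b)` is a sum of
monomials with both exponents positive, and
`M_(a) M_(c) = M_(a+c) + M_(a,c) + M_(c,a)`.
-/

open MvPolynomial Finset

open Classical in
/-- The monomial quasisymmetric polynomial `M_α(x₁,x₂)` in two variables,
for a composition `α` (recorded as a list of positive integers). -/
noncomputable def monomialQSym2 (α : List ℕ) : MvPolynomial (Fin 2) ℂ :=
  ∑ i ∈ Finset.univ.filter (fun i : Fin α.length → Fin 2 => StrictMono i),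
    ∏ ℓ : Fin α.length, X (i ℓ) ^ α.get ℓ

theorem mem_of_two_step_recurrence {A S : Type*} [Ring A] [SetLike S A] [SubringClass S A]
    {s : S} {p q : A} (hp : p ∈ s) (hq : q ∈ s) {f : ℕ → A} (h0 : f 0 ∈ s) (h1 : f 1 ∈ s)
    (hf : ∀ n, f (n + 2) = p * f (n + 1) - q * f n) (n : ℕ) : f n ∈ s := by
  induction n using Nat.twoStepInduction with
  | zero => exact h0
  | one => exact h1
  | more n hn hn1 => rw [hf]; exact sub_mem (mul_mem hp hn1) (mul_mem hq hn)

section Generators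

variable (R : Type*) [CommRing R]

def qsym2Generators : Set (MvPolynomial (Fin 2) R) := {X 0 * X 1, X 0 + X 1, X 0 ^ 2 * X 1}

/-- `M_∅`, `M_(a)` and `M_(a,b)` for positive `a, b`, written out in the variables. -/
def qsym2Monomials : Set (MvPolynomial (Fin 2) R) :=
  insert 1 (Set.range (fun a : ℕ => X 0 ^ (a + 1) + X 1 ^ (a + 1)) ∪
    Set.range (fun ab : ℕ × ℕ => X 0 ^ (ab.1 + 1) * X 1 ^ (ab.2 + 1)))

variable {R}

lemma X_mul_X_mem_adjoin : X 0 * X 1 ∈ Algebra.adjoin R (qsym2Generators R) :=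
  Algebra.subset_adjoin (by simp [qsym2Generators])

lemma X_add_X_mem_adjoin : X 0 + X 1 ∈ Algebra.adjoin R (qsym2Generators R) :=
  Algebra.subset_adjoin (by simp [qsym2Generators])

lemma X_sq_mul_X_mem_adjoin : X 0 ^ 2 * X 1 ∈ Algebra.adjoin R (qsym2Generators R) :=
  Algebra.subset_adjoin (by simp [qsym2Generators])

lemma pow_add_pow_mem_adjoin (n : ℕ) :
    X 0 ^ n + X 1 ^ n ∈ Algebra.adjoin R (qsym2Generators R) :=
  mem_of_two_step_recurrence (f := fun n => X 0 ^ n + X 1 ^ n) X_add_X_mem_adjoin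
    X_mul_X_mem_adjoin (by simpa using add_mem (one_mem _) (one_mem _))
    (by simpa using X_add_X_mem_adjoin)
    (fun n => by ring) n

lemma pow_succ_mul_X_mem_adjoin (n : ℕ) :
    X 0 ^ (n + 1) * X 1 ∈ Algebra.adjoin R (qsym2Generators R) :=
  mem_of_two_step_recurrence (f := fun n => X 0 ^ (n + 1) * X 1) X_add_X_mem_adjoin
    X_mul_X_mem_adjoin (by simpa using X_mul_X_mem_adjoin) X_sq_mul_X_mem_adjoin
    (fun n => by ring) n

lemma X_mul_pow_succ_mem_adjoin (n : ℕ) :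
    X 0 * X 1 ^ (n + 1) ∈ Algebra.adjoin R (qsym2Generators R) := by
  have h : (X 0 * X 1 ^ (n + 1) : MvPolynomial (Fin 2) R) =
      X 0 * X 1 * (X 0 ^ n + X 1 ^ n) - X 0 ^ (n + 1) * X 1 := by ring
  rw [h]
  exact sub_mem (mul_mem X_mul_X_mem_adjoin (pow_add_pow_mem_adjoin n))
    (pow_succ_mul_X_mem_adjoin n)

lemma pow_succ_mul_pow_succ_mem_adjoin (a b : ℕ) :
    X 0 ^ (a + 1) * X 1 ^ (b + 1) ∈ Algebra.adjoin R (qsym2Generators R) := by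
  rcases le_total a b with hab | hab
  · obtain ⟨k, rfl⟩ := Nat.exists_eq_add_of_le hab
    have h : (X 0 ^ (a + 1) * X 1 ^ (a + k + 1) : MvPolynomial (Fin 2) R) =
        (X 0 * X 1) ^ a * (X 0 * X 1 ^ (k + 1)) := by ring
    rw [h]
    exact mul_mem (pow_mem X_mul_X_mem_adjoin a) (X_mul_pow_succ_mem_adjoin k)
  · obtain ⟨k, rfl⟩ := Nat.exists_eq_add_of_le hab
    have h : (X 0 ^ (b + k + 1) * X 1 ^ (b + 1) : MvPolynomial (Fin 2) R) =
        (X 0 * X 1) ^ b * (X 0 ^ (k + 1) * X 1) := by ring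
    rw [h]
    exact mul_mem (pow_mem X_mul_X_mem_adjoin b) (pow_succ_mul_X_mem_adjoin k)

lemma qsym2Monomials_subset_adjoin :
    qsym2Monomials R ⊆ Algebra.adjoin R (qsym2Generators R) := by
  rintro _ (rfl | ⟨a, rfl⟩ | ⟨⟨a, b⟩, rfl⟩)
  · exact one_mem _
  · exact pow_add_pow_mem_adjoin (a + 1)
  · exact pow_succ_mul_pow_succ_mem_adjoin a b

lemma qsym2Generators_subset_qsym2Monomials : qsym2Generators R ⊆ qsym2Monomials R := by
  rintro _ (rfl | rfl | rfl)
  · exact Or.inr (Or.inr ⟨(0, 0), by simp⟩)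
  · exact Or.inr (Or.inl ⟨0, by simp⟩)
  · exact Or.inr (Or.inr ⟨(1, 0), by simp⟩)

lemma pow_succ_mul_pow_succ_mem_span (a b : ℕ) :
    X 0 ^ (a + 1) * X 1 ^ (b + 1) ∈ Submodule.span R (qsym2Monomials R) :=
  Submodule.subset_span (Or.inr (Or.inr ⟨(a, b), rfl⟩))

lemma pow_succ_add_pow_succ_mem_span (a : ℕ) :
    X 0 ^ (a + 1) + X 1 ^ (a + 1) ∈ Submodule.span R (qsym2Monomials R) :=
  Submodule.subset_span (Or.inr (Or.inl ⟨a, rfl⟩))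

lemma pow_succ_mul_pow_succ_mul_mem_span (a b : ℕ) {q : MvPolynomial (Fin 2) R}
    (hq : q ∈ qsym2Monomials R) :
    X 0 ^ (a + 1) * X 1 ^ (b + 1) * q ∈ Submodule.span R (qsym2Monomials R) := by
  rcases hq with rfl | ⟨c, rfl⟩ | ⟨⟨c, d⟩, rfl⟩
  · simpa using pow_succ_mul_pow_succ_mem_span a b
  · have h : (X 0 ^ (a + 1) * X 1 ^ (b + 1) * (X 0 ^ (c + 1) + X 1 ^ (c + 1)) :
        MvPolynomial (Fin 2) R) = X 0 ^ (a + c + 1 + 1) * X 1 ^ (b + 1) +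
          X 0 ^ (a + 1) * X 1 ^ (b + c + 1 + 1) := by ring
    rw [h]
    exact add_mem (pow_succ_mul_pow_succ_mem_span _ _) (pow_succ_mul_pow_succ_mem_span _ _)
  · have h : (X 0 ^ (a + 1) * X 1 ^ (b + 1) * (X 0 ^ (c + 1) * X 1 ^ (d + 1)) :
        MvPolynomial (Fin 2) R) = X 0 ^ (a + c + 1 + 1) * X 1 ^ (b + d + 1 + 1) := by ring
    rw [h]
    exact pow_succ_mul_pow_succ_mem_span _ _

lemma pow_add_pow_mul_pow_add_pow_mem_span (a c : ℕ) :
    (X 0 ^ (a + 1) + X 1 ^ (a + 1)) * (X 0 ^ (c + 1) + X 1 ^ (c + 1)) ∈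
      Submodule.span R (qsym2Monomials R) := by
  have h : ((X 0 ^ (a + 1) + X 1 ^ (a + 1)) * (X 0 ^ (c + 1) + X 1 ^ (c + 1)) :
      MvPolynomial (Fin 2) R) = X 0 ^ (a + c + 1 + 1) + X 1 ^ (a + c + 1 + 1) +
        (X 0 ^ (a + 1) * X 1 ^ (c + 1) + X 0 ^ (c + 1) * X 1 ^ (a + 1)) := by ring
  rw [h]
  exact add_mem (pow_succ_add_pow_succ_mem_span _)
    (add_mem (pow_succ_mul_pow_succ_mem_span _ _) (pow_succ_mul_pow_succ_mem_span _ _))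

lemma mul_mem_span_qsym2Monomials {p q : MvPolynomial (Fin 2) R}
    (hp : p ∈ qsym2Monomials R) (hq : q ∈ qsym2Monomials R) :
    p * q ∈ Submodule.span R (qsym2Monomials R) := by
  rcases hp with rfl | ⟨a, rfl⟩ | ⟨⟨a, b⟩, rfl⟩
  · simpa using Submodule.subset_span hq
  · rcases hq with rfl | ⟨c, rfl⟩ | ⟨⟨c, d⟩, rfl⟩
    · simpa using pow_succ_add_pow_succ_mem_span a
    · exact pow_add_pow_mul_pow_add_pow_mem_span a c
    · rw [mul_comm]
      exact pow_succ_mul_pow_succ_mul_mem_span c d (Or.inr (Or.inl ⟨a, rfl⟩))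
  · exact pow_succ_mul_pow_succ_mul_mem_span a b hq

lemma span_qsym2Monomials_mul_le :
    Submodule.span R (qsym2Monomials R) * Submodule.span R (qsym2Monomials R) ≤
      Submodule.span R (qsym2Monomials R) := by
  rw [Submodule.span_mul_span, Submodule.span_le]
  rintro _ ⟨p, hp, q, hq, rfl⟩
  exact mul_mem_span_qsym2Monomials hp hq

theorem adjoin_qsym2Generators_eq_span :
    Subalgebra.toSubmodule (Algebra.adjoin R (qsym2Generators R)) =
      Submodule.span R (qsym2Monomials R) := by
  refine le_antisymm ?_ (Submodule.span_le.2 qsym2Monomials_subset_adjoin)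
  let B := (Submodule.span R (qsym2Monomials R)).toSubalgebra
    (Submodule.subset_span (Or.inl rfl)) fun _ _ hx hy =>
      span_qsym2Monomials_mul_le (Submodule.mul_mem_mul hx hy)
  exact (Algebra.adjoin_le (qsym2Generators_subset_qsym2Monomials.trans Submodule.subset_span) :
    _ ≤ B)

end Generators

lemma monomialQSym2_nil : monomialQSym2 [] = 1 := by
  simp [monomialQSym2, Finset.filter_true_of_mem fun i _ => Subsingleton.strictMono i]

lemma monomialQSym2_singleton (a : ℕ) : monomialQSym2 [a] = X 0 ^ a + X 1 ^ a := by
  simp [monomialQSym2, Finset.filter_true_of_mem fun i _ => Subsingleton.strictMono i,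
    Fintype.sum_equiv (Equiv.funUnique (Fin 1) (Fin 2)) _ (fun j => X j ^ a)]

lemma monomialQSym2_pair (a b : ℕ) : monomialQSym2 [a, b] = X 0 ^ a * X 1 ^ b := by
  have : univ.filter (fun i : Fin 2 → Fin 2 => StrictMono i) = {id} := by
    ext i
    simpa using ⟨StrictMono.eq_id, fun h => h ▸ strictMono_id⟩
  simp [monomialQSym2, this, Fin.prod_univ_two]

lemma setOf_monomialQSym2_eq :
    {p | ∃ α : List ℕ, α.length ≤ 2 ∧ (∀ a ∈ α, 0 < a) ∧ p = monomialQSym2 α} =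
      qsym2Monomials ℂ := by
  ext p
  constructor
  · rintro ⟨α, hlen, hpos, rfl⟩
    rcases α with _ | ⟨a, _ | ⟨b, _ | ⟨c, t⟩⟩⟩
    · exact Or.inl monomialQSym2_nil
    · obtain ⟨a, rfl⟩ := Nat.exists_eq_add_one_of_ne_zero (hpos a (by simp)).ne'
      exact Or.inr (Or.inl ⟨a, (monomialQSym2_singleton _).symm⟩)
    · obtain ⟨a, rfl⟩ := Nat.exists_eq_add_one_of_ne_zero (hpos a (by simp)).ne'
      obtain ⟨b, rfl⟩ := Nat.exists_eq_add_one_of_ne_zero (hpos b (by simp)).ne'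
      exact Or.inr (Or.inr ⟨(a, b), (monomialQSym2_pair _ _).symm⟩)
    · simp at hlen
  · rintro (rfl | ⟨a, rfl⟩ | ⟨⟨a, b⟩, rfl⟩)
    · exact ⟨[], by simp, by simp, monomialQSym2_nil.symm⟩
    · exact ⟨[a + 1], by simp, by simp, (monomialQSym2_singleton _).symm⟩
    · exact ⟨[a + 1, b + 1], by simp, by simp, (monomialQSym2_pair _ _).symm⟩

/-- `QSym₂`, the ring of quasisymmetric polynomials in two variables (the span of
the monomial quasisymmetric polynomials `M_α(x₁,x₂)` over compositions `α` of
length at most `2`), is generated as a `ℂ`-algebra by `x₁x₂`, `x₁+x₂`, `x₁²x₂`. -/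
theorem qsym2_generators :
    Subalgebra.toSubmodule
        (Algebra.adjoin ℂ
          ({X 0 * X 1, X 0 + X 1, X 0 ^ 2 * X 1} : Set (MvPolynomial (Fin 2) ℂ)))
      = Submodule.span ℂ
          {p : MvPolynomial (Fin 2) ℂ |
            ∃ α : List ℕ, α.length ≤ 2 ∧ (∀ a ∈ α, 0 < a) ∧ p = monomialQSym2 α} := by
  rw [setOf_monomialQSym2_eq]
  exact adjoin_qsym2Generators_eq_span
end

section
/- The truncated double monomial quasisymmetric polynomials M_{n,α}(𝐱,𝐲), as α ranges over compositions of length at most n, are linearly independent over the ring Λ = ℤ[y₁,y₂,…]. -/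
/-!
Order compositions by their size `|α| = a₁ + ⋯ + a_k` and pair `M_{n,β}` with the coefficient of
the monomial `x₁^{a₁} ⋯ x_k^{a_k}`. Each summand of `M_{n,β}` is a product of monic factorial
powers `(x_{i_ℓ} − y₁) ⋯ (x_{i_ℓ} − y_{b_ℓ})`, whose only monomial of total degree at least `|β|`
is `x_{i₁}^{b₁} ⋯ x_{i_k}^{b_k}`; since `i` is increasing and the `b_ℓ` are positive, this
monomial determines `i` and `β`. So for `|β| ≤ |α|` the coefficient is `1` if `β = α` and `0`
otherwise, and a family that is unitriangular against linear functionals is linearly independent.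
-/

open MvPolynomial Finset

open Classical in
/-- The truncated double monomial quasisymmetric polynomial
`M_{n,α}(𝐱,𝐲) = Σ_{1≤i₁<⋯<i_k≤n} ∏_{ℓ=1}^{k} ∏_{j=1}^{a_ℓ} (x_{i_ℓ} − y_j)`
in `ℤ[y₁,y₂,…][x₁,…,xₙ]`, where `y_j` is `MvPolynomial.X j`. -/
noncomputable def doubleM (n : ℕ) (α : List ℕ) :
    MvPolynomial (Fin n) (MvPolynomial ℕ ℤ) :=
  ∑ i ∈ Finset.univ.filter (fun i : Fin α.length → Fin n => StrictMono i),
    ∏ ℓ : Fin α.length, ∏ j ∈ Finset.range (α.get ℓ),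
      (X (i ℓ) - C (MvPolynomial.X (j + 1)))

theorem linearIndependent_of_triangular {ι κ R M : Type*} [LinearOrder κ] [Ring R]
    [AddCommGroup M] [Module R M] {f : ι → M} (w : ι → κ) (φ : ι → M →ₗ[R] R)
    (h_diag : ∀ i, φ i (f i) = 1) (h_lower : ∀ i j, w j ≤ w i → i ≠ j → φ i (f j) = 0) :
    LinearIndependent R f := by
  classical
  rw [linearIndependent_iff']
  intro s
  induction s using Finset.induction_on_max_value w with
  | empty => simp
  | insert a s ha hmax ih =>
    intro g hg
    have hga : g a = 0 := by
      have h := congrArg (φ a) hg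
      rw [sum_insert ha, map_add, map_sum, map_smul, h_diag, smul_eq_mul, mul_one,
        sum_eq_zero fun j hj => by
          rw [map_smul, h_lower a j (hmax j hj) (ne_of_mem_of_not_mem hj ha).symm, smul_zero],
        add_zero, map_zero] at h
      exact h
    rw [sum_insert ha, hga, zero_smul, zero_add] at hg
    intro i hi
    rcases mem_insert.1 hi with rfl | hi
    exacts [hga, ih g hg i hi]

section TopCoefficient

variable {R σ ι : Type*} [CommSemiring R] [Fintype ι] [DecidableEq ι]

theorem prod_aeval_X_eq_sum_monomial (v : ι → σ) (q : ι → Polynomial R) :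
    ∏ ℓ, Polynomial.aeval (X (v ℓ) : MvPolynomial σ R) (q ℓ) =
      ∑ e ∈ Fintype.piFinset fun ℓ => range ((q ℓ).natDegree + 1),
        monomial (∑ ℓ, Finsupp.single (v ℓ) (e ℓ)) (∏ ℓ, (q ℓ).coeff (e ℓ)) := by
  simp_rw [Polynomial.aeval_eq_sum_range, prod_univ_sum, X_pow_eq_monomial, smul_monomial,
    smul_eq_mul, mul_one, monomial_sum_prod]

theorem coeff_prod_aeval_X_of_natDegree_le [DecidableEq σ] {v : ι → σ} {q : ι → Polynomial R}
    (hq : ∀ ℓ, (q ℓ).Monic) {m : σ →₀ ℕ} (hm : ∑ ℓ, (q ℓ).natDegree ≤ m.degree) :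
    coeff m (∏ ℓ, Polynomial.aeval (X (v ℓ) : MvPolynomial σ R) (q ℓ)) =
      if ∑ ℓ, Finsupp.single (v ℓ) (q ℓ).natDegree = m then 1 else 0 := by
  rw [prod_aeval_X_eq_sum_monomial, coeff_sum,
    sum_eq_single_of_mem (fun ℓ => (q ℓ).natDegree) (by simp [Fintype.mem_piFinset])]
  · simp [coeff_monomial, (hq _).coeff_natDegree]
  · intro e he hne
    rw [coeff_monomial, if_neg]
    intro heq
    have hle : ∀ ℓ, e ℓ ≤ (q ℓ).natDegree := by
      simpa [Fintype.mem_piFinset, Nat.lt_succ_iff] using he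
    obtain ⟨ℓ, hℓ⟩ := Function.ne_iff.1 hne
    have hlt : ∑ ℓ, e ℓ < ∑ ℓ, (q ℓ).natDegree :=
      sum_lt_sum (fun ℓ _ => hle ℓ) ⟨ℓ, mem_univ ℓ, (hle ℓ).lt_of_ne hℓ⟩
    have hdeg : m.degree = ∑ ℓ, e ℓ := by simp [← heq, map_sum, Finsupp.degree_single]
    omega

end TopCoefficient

section Placement

variable {σ ι : Type*} [Fintype ι] {v : ι → σ} {e : ι → ℕ}

theorem sum_single_apply_of_injective (hv : Function.Injective v) (ℓ : ι) :
    (∑ ℓ', Finsupp.single (v ℓ') (e ℓ')) (v ℓ) = e ℓ := by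
  classical
  simp [Finsupp.finsetSum_apply, Finsupp.single_apply, hv.eq_iff]

theorem coe_support_sum_single (hv : Function.Injective v) (he : ∀ ℓ, e ℓ ≠ 0) :
    ((∑ ℓ, Finsupp.single (v ℓ) (e ℓ)).support : Set σ) = Set.range v := by
  ext x
  rw [Finset.mem_coe, Finsupp.mem_support_iff]
  constructor
  · intro hx
    by_contra hxv
    refine hx ?_
    rw [Finsupp.finsetSum_apply]
    exact sum_eq_zero fun ℓ _ => Finsupp.single_eq_of_ne fun h => hxv ⟨ℓ, h.symm⟩
  · rintro ⟨ℓ, rfl⟩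
    rw [sum_single_apply_of_injective hv]
    exact he ℓ

end Placement

noncomputable def compositionExp {n : ℕ} (α : List ℕ) (h : α.length ≤ n) : Fin n →₀ ℕ :=
  ∑ ℓ, Finsupp.single (Fin.castLE h ℓ) (α.get ℓ)

theorem degree_compositionExp {n : ℕ} (α : List ℕ) (h : α.length ≤ n) :
    (compositionExp α h).degree = α.sum := by
  simp only [compositionExp, map_sum, Finsupp.degree_single]
  rw [← List.sum_ofFn, List.ofFn_get]

theorem sum_single_eq_compositionExp_iff {n : ℕ} {α β : List ℕ} (hα : α.length ≤ n)
    (hβ : β.length ≤ n) (hα_pos : ∀ a ∈ α, 0 < a) (hβ_pos : ∀ b ∈ β, 0 < b)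
    {i : Fin β.length → Fin n} (hi : StrictMono i) :
    ∑ ℓ, Finsupp.single (i ℓ) (β.get ℓ) = compositionExp α hα ↔ α = β ∧ i = Fin.castLE hβ := by
  constructor
  · intro h
    have hrange : Set.range i = Set.range (Fin.castLE hα) := by
      rw [← coe_support_sum_single hi.injective fun ℓ => (hβ_pos _ (List.get_mem β ℓ)).ne',
        ← coe_support_sum_single (Fin.castLE_injective hα)
          fun ℓ => (hα_pos _ (List.get_mem α ℓ)).ne', h, compositionExp]
    have hlen : β.length = α.length := by
      have hcard := congrArg Set.ncard hrange
      rwa [Set.ncard_range_of_injective hi.injective,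
        Set.ncard_range_of_injective (Fin.castLE_injective hα), Nat.card_fin, Nat.card_fin] at hcard
    have hi_eq : i = Fin.castLE hβ := by
      rw [← hi.range_inj (Fin.strictMono_castLE hβ), hrange, Fin.range_castLE, Fin.range_castLE,
        hlen]
    refine ⟨List.ext_get hlen.symm fun ℓ hℓα hℓβ => ?_, hi_eq⟩
    have hpt := DFunLike.congr_fun h (i ⟨ℓ, hℓβ⟩)
    rwa [sum_single_apply_of_injective hi.injective, hi_eq, show Fin.castLE hβ ⟨ℓ, hℓβ⟩ =
      Fin.castLE hα ⟨ℓ, hℓα⟩ from rfl, compositionExp,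
      sum_single_apply_of_injective (Fin.castLE_injective hα), eq_comm] at hpt
  · rintro ⟨rfl, rfl⟩
    rfl

local notation "Λ" => MvPolynomial ℕ ℤ

noncomputable def factorialPoly {R : Type*} [CommRing R] (y : ℕ → R) (b : ℕ) : Polynomial R :=
  ∏ j ∈ range b, (Polynomial.X - Polynomial.C (y j))

theorem monic_factorialPoly {R : Type*} [CommRing R] (y : ℕ → R) (b : ℕ) :
    (factorialPoly y b).Monic :=
  Polynomial.monic_prod_of_monic _ _ fun _ _ => Polynomial.monic_X_sub_C _

theorem natDegree_factorialPoly {R : Type*} [CommRing R] [Nontrivial R] (y : ℕ → R) (b : ℕ) :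
    (factorialPoly y b).natDegree = b := by
  rw [factorialPoly, Polynomial.natDegree_prod_of_monic _ _ fun _ _ => Polynomial.monic_X_sub_C _]
  simp

open Classical in
theorem doubleM_eq_sum_prod_aeval (n : ℕ) (β : List ℕ) :
    doubleM n β = ∑ i ∈ univ.filter (fun i : Fin β.length → Fin n => StrictMono i),
      ∏ ℓ, Polynomial.aeval (X (i ℓ) : MvPolynomial (Fin n) Λ)
        (factorialPoly (fun j => (X (j + 1) : Λ)) (β.get ℓ)) := by
  simp [doubleM, factorialPoly, MvPolynomial.algebraMap_eq]

theorem coeff_compositionExp_doubleM {n : ℕ} {α β : List ℕ} (hα : α.length ≤ n)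
    (hβ : β.length ≤ n) (hα_pos : ∀ a ∈ α, 0 < a) (hβ_pos : ∀ b ∈ β, 0 < b)
    (hsum : β.sum ≤ α.sum) :
    coeff (compositionExp α hα) (doubleM n β) = if α = β then 1 else 0 := by
  classical
  have hdeg : ∑ ℓ, (factorialPoly (fun j => (X (j + 1) : Λ)) (β.get ℓ)).natDegree ≤
      (compositionExp α hα).degree := by
    simpa [natDegree_factorialPoly, degree_compositionExp, ← List.sum_ofFn] using hsum
  rw [doubleM_eq_sum_prod_aeval, coeff_sum]
  calc _ = ∑ i ∈ univ.filter (fun i : Fin β.length → Fin n => StrictMono i),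
        if α = β ∧ i = Fin.castLE hβ then (1 : Λ) else 0 :=
        sum_congr rfl fun i hi => by
          rw [coeff_prod_aeval_X_of_natDegree_le (fun ℓ => monic_factorialPoly _ _) hdeg]
          simp only [natDegree_factorialPoly,
            sum_single_eq_compositionExp_iff hα hβ hα_pos hβ_pos (mem_filter.1 hi).2]
    _ = if α = β then 1 else 0 := by
        split_ifs with h
        · subst h
          simp [Fin.strictMono_castLE]
        · simp [h]

/-- The `M_{n,α}(𝐱,𝐲)`, as `α` ranges over compositions of length at most `n`, are
linearly independent over `Λ = ℤ[y₁,y₂,…]`. -/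
theorem doubleM_linearIndependent (n : ℕ) :
    LinearIndependent (MvPolynomial ℕ ℤ)
      (fun α : {l : List ℕ // l.length ≤ n ∧ ∀ a ∈ l, 0 < a} => doubleM n α.1) :=
  linearIndependent_of_triangular (fun α => α.1.sum) (fun α => lcoeff _ (compositionExp α.1 α.2.1))
    (fun α => by simpa using coeff_compositionExp_doubleM α.2.1 α.2.1 α.2.2 α.2.2 le_rfl)
    (fun α β hle hne => by
      rw [lcoeff_apply, coeff_compositionExp_doubleM α.2.1 β.2.1 α.2.2 β.2.2 hle,
        if_neg (hne ∘ Subtype.ext)])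
end

section
/- Separation property: suppose χ: A → ℂ is a character of A with kernel 𝔪, and suppose p, p' are n-tuples of characters of A whose subsequences of non-base-point characters (characters ≠ χ), listed in order, are not equal. Suppose that for any two distinct characters ψ ≠ ψ' of A with ψ, ψ' ≠ χ there exists f ∈ 𝔪 with ψ(f) = 0 and ψ'(f) ≠ 0, and that for any character ψ ≠ χ there is f ∈ 𝔪 with ψ(f) ≠ 0. Then there exists F ∈ QSym_{n,𝔪}(A) with F(p) ≠ F(p'). -/
open Finset

section Aux

variable {A : Type*} [CommRing A] (χ : A →+* ℂ)

open Classical in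
lemma qsym_sum_eq_sum_good (n s : ℕ) (p : Fin n → (A →+* ℂ)) (f : Fin s → A)
    (hf : ∀ ℓ, χ (f ℓ) = 0) :
    (∑ k ∈ Finset.univ.filter (fun k : Fin s → Fin n => StrictMono k),
        ∏ ℓ : Fin s, p (k ℓ) (f ℓ))
      = ∑ k ∈ Finset.univ.filter
            (fun k : Fin s → Fin n => StrictMono k ∧ ∀ ℓ, p (k ℓ) ≠ χ),
          ∏ ℓ : Fin s, p (k ℓ) (f ℓ) := by
  symm
  apply Finset.sum_subset
  · intro k hk
    simp only [Finset.mem_filter, Finset.mem_univ, true_and] at hk ⊢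
    exact hk.1
  · intro k hk hnk
    simp only [Finset.mem_filter, Finset.mem_univ, true_and] at hk hnk
    push_neg at hnk
    obtain ⟨ℓ, hℓ⟩ := hnk hk
    exact Finset.prod_eq_zero (Finset.mem_univ ℓ) (by rw [hℓ]; exact hf ℓ)

open Classical in
lemma qsym_good_empty {n s : ℕ} (p : Fin n → (A →+* ℂ))
    (hs : (Finset.univ.filter (fun i => p i ≠ χ)).card < s) :
    Finset.univ.filter
        (fun k : Fin s → Fin n => StrictMono k ∧ ∀ ℓ, p (k ℓ) ≠ χ) = ∅ := by
  ext k
  simp only [Finset.mem_filter, Finset.mem_univ, true_and, Finset.notMem_empty, iff_false]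
  rintro ⟨hmono, hall⟩
  have : (Finset.univ : Finset (Fin s)).card ≤
      (Finset.univ.filter (fun i => p i ≠ χ)).card := by
    apply Finset.card_le_card_of_injOn k
    · intro ℓ _; exact Finset.mem_filter.mpr ⟨Finset.mem_univ _, hall ℓ⟩
    · exact fun a _ b _ h => hmono.injective h
  simp only [Finset.card_univ, Fintype.card_fin] at this
  omega

open Classical in
lemma qsym_good_singleton {n s : ℕ} (p : Fin n → (A →+* ℂ))
    (hs : (Finset.univ.filter (fun i => p i ≠ χ)).card = s) :
    Finset.univ.filter
        (fun k : Fin s → Fin n => StrictMono k ∧ ∀ ℓ, p (k ℓ) ≠ χ)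
      = {⇑((Finset.univ.filter (fun i => p i ≠ χ)).orderEmbOfFin hs)} := by
  ext k
  simp only [Finset.mem_filter, Finset.mem_univ, true_and, Finset.mem_singleton]
  constructor
  · rintro ⟨hmono, hall⟩
    exact Finset.orderEmbOfFin_unique hs
      (fun ℓ => Finset.mem_filter.mpr ⟨Finset.mem_univ _, hall ℓ⟩) hmono
  · rintro rfl
    refine ⟨(Finset.orderEmbOfFin _ hs).strictMono, fun ℓ => ?_⟩
    have := Finset.orderEmbOfFin_mem (Finset.univ.filter (fun i => p i ≠ χ)) hs ℓ
    exact (Finset.mem_filter.mp this).2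

open Classical in
lemma qsym_filter_ofFn_eq {n m : ℕ} (p : Fin n → (A →+* ℂ))
    (hm : (Finset.univ.filter (fun i => p i ≠ χ)).card = m) :
    (List.ofFn p).filter (fun ψ => ψ ≠ χ)
      = List.ofFn (fun j : Fin m =>
          p ((Finset.univ.filter (fun i => p i ≠ χ)).orderEmbOfFin hm j)) := by
  set S := Finset.univ.filter (fun i => p i ≠ χ) with hS
  set M := (List.finRange n).filter (fun i => decide (p i ≠ χ)) with hMdef
  have hMnodup : M.Nodup := (List.nodup_finRange n).filter _
  have hMS : M = S.sort (· ≤ ·) := by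
    haveI : IsAntisymm (Fin n) (· < ·) := ⟨fun a b h h' => absurd h' (asymm h)⟩
    refine (fun (hp : M.Perm (S.sort (· ≤ ·))) (hs : M.Pairwise (· < ·)) =>
      List.Perm.eq_of_pairwise (le := (· < ·)) (fun a b _ _ h h' => absurd h' (asymm h))
        hs S.sortedLT_sort.pairwise hp) ?_ ?_
    · apply (List.perm_ext_iff_of_nodup hMnodup (S.sort_nodup _)).mpr
      intro i
      simp [hMdef, hS, Finset.mem_sort]
    · exact List.Pairwise.filter _ (List.pairwise_lt_finRange n)
  have h1 : (List.ofFn p).filter (fun ψ => ψ ≠ χ) = M.map p := by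
    rw [List.ofFn_eq_map, List.filter_map]
    rfl
  rw [h1, hMS]
  apply List.ext_getElem
  · simp [Finset.length_sort, hm]
  · intro j hj hj'
    simp only [List.getElem_map, List.getElem_ofFn]
    rfl

end Aux

section Main

variable {A : Type*} [CommRing A] (χ : A →+* ℂ)

open Classical in
lemma qsym_aux_lt
    (hnonvan : ∀ ψ : A →+* ℂ, ψ ≠ χ → ∃ f ∈ RingHom.ker χ, ψ f ≠ 0)
    {n : ℕ} (p p' : Fin n → (A →+* ℂ))
    (h : (Finset.univ.filter (fun i => p i ≠ χ)).card
        < (Finset.univ.filter (fun i => p' i ≠ χ)).card) :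
    ∃ s : ℕ, s ≤ n ∧ ∃ f : Fin s → A, (∀ ℓ, f ℓ ∈ RingHom.ker χ) ∧
      (∑ k ∈ Finset.univ.filter (fun k : Fin s → Fin n => StrictMono k),
          ∏ ℓ : Fin s, p (k ℓ) (f ℓ))
        ≠ ∑ k ∈ Finset.univ.filter (fun k : Fin s → Fin n => StrictMono k),
            ∏ ℓ : Fin s, p' (k ℓ) (f ℓ) := by
  set S' := Finset.univ.filter (fun i => p' i ≠ χ) with hS'
  refine ⟨S'.card, ?_, ?_⟩
  · calc S'.card ≤ (Finset.univ : Finset (Fin n)).card :=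
          Finset.card_le_card (Finset.filter_subset _ _)
      _ = n := by simp
  · set e' := S'.orderEmbOfFin rfl with he'
    have hne' : ∀ ℓ : Fin S'.card, p' (e' ℓ) ≠ χ := fun ℓ =>
      (Finset.mem_filter.mp (Finset.orderEmbOfFin_mem S' rfl ℓ)).2
    refine ⟨fun ℓ => (hnonvan _ (hne' ℓ)).choose,
      fun ℓ => (hnonvan _ (hne' ℓ)).choose_spec.1, ?_⟩
    have hfχ : ∀ ℓ, χ ((hnonvan _ (hne' ℓ)).choose) = 0 := fun ℓ =>
      RingHom.mem_ker.mp (hnonvan _ (hne' ℓ)).choose_spec.1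
    rw [qsym_sum_eq_sum_good χ n _ p _ hfχ, qsym_sum_eq_sum_good χ n _ p' _ hfχ,
      qsym_good_empty χ p h, qsym_good_singleton χ p' rfl,
      Finset.sum_empty, Finset.sum_singleton]
    intro hcon
    have : (∏ ℓ : Fin S'.card, (p' (e' ℓ)) ((hnonvan _ (hne' ℓ)).choose)) ≠ 0 :=
      Finset.prod_ne_zero_iff.mpr fun ℓ _ => (hnonvan _ (hne' ℓ)).choose_spec.2
    exact this hcon.symm

end Main

open Classical in
/-- Separation property: let `χ : A → ℂ` be the base-point character, with
`𝔪 = ker χ`.  Suppose (i) any two distinct non-base characters are separated by some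
`f ∈ 𝔪` vanishing at the first but not the second, and (ii) every non-base character
is nonvanishing on some element of `𝔪`.  If the ordered subsequences of non-base-point
entries of two `n`-tuples `p, p'` of characters are not equal (i.e. `p ≁ p'`), then some
generator `F = Σ_{k₁<⋯<k_s} f₁^{(k₁)}⋯f_s^{(k_s)}` of `QSym_{n,𝔪}(A)` (with `f_i ∈ 𝔪`)
satisfies `F(p) ≠ F(p')`; in particular `QSym_{n,𝔪}(A)` separates inequivalent tuples. -/
theorem qsym_separates_tuples
    {A : Type*} [CommRing A] (χ : A →+* ℂ)
    (hsep : ∀ ψ ψ' : A →+* ℂ, ψ ≠ ψ' → ψ ≠ χ → ψ' ≠ χ →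
      ∃ f ∈ RingHom.ker χ, ψ f = 0 ∧ ψ' f ≠ 0)
    (hnonvan : ∀ ψ : A →+* ℂ, ψ ≠ χ → ∃ f ∈ RingHom.ker χ, ψ f ≠ 0)
    (n : ℕ) (p p' : Fin n → (A →+* ℂ))
    (hne : (List.ofFn p).filter (fun ψ => ψ ≠ χ)
        ≠ (List.ofFn p').filter (fun ψ => ψ ≠ χ)) :
    ∃ s : ℕ, s ≤ n ∧ ∃ f : Fin s → A, (∀ ℓ, f ℓ ∈ RingHom.ker χ) ∧
      (∑ k ∈ Finset.univ.filter (fun k : Fin s → Fin n => StrictMono k),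
          ∏ ℓ : Fin s, p (k ℓ) (f ℓ))
        ≠ ∑ k ∈ Finset.univ.filter (fun k : Fin s → Fin n => StrictMono k),
            ∏ ℓ : Fin s, p' (k ℓ) (f ℓ) := by
  set S := Finset.univ.filter (fun i => p i ≠ χ) with hS
  set S' := Finset.univ.filter (fun i => p' i ≠ χ) with hS'
  rcases lt_trichotomy S.card S'.card with h | h | h
  · exact qsym_aux_lt χ hnonvan p p' h
  · -- equal cardinalities
    have h' : S'.card = S.card := h.symm
    set e := S.orderEmbOfFin rfl with he
    set e' := S'.orderEmbOfFin h' with he'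
    have hpe : ∀ ℓ : Fin S.card, p (e ℓ) ≠ χ := fun ℓ =>
      (Finset.mem_filter.mp (Finset.orderEmbOfFin_mem S rfl ℓ)).2
    have hpe' : ∀ ℓ : Fin S.card, p' (e' ℓ) ≠ χ := fun ℓ =>
      (Finset.mem_filter.mp (Finset.orderEmbOfFin_mem S' h' ℓ)).2
    have hj : ∃ j : Fin S.card, p (e j) ≠ p' (e' j) := by
      by_contra hcon
      push_neg at hcon
      apply hne
      rw [qsym_filter_ofFn_eq χ p rfl, qsym_filter_ofFn_eq χ p' h']
      exact congrArg List.ofFn (funext hcon)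
    obtain ⟨j, hj⟩ := hj
    obtain ⟨g, hgker, hg0, hg2⟩ := hsep (p' (e' j)) (p (e j)) hj.symm (hpe' j) (hpe j)
    refine ⟨S.card, ?_, ?_⟩
    · calc S.card ≤ (Finset.univ : Finset (Fin n)).card :=
          Finset.card_le_card (Finset.filter_subset _ _)
        _ = n := by simp
    · set f : Fin S.card → A := fun ℓ =>
        if ℓ = j then g else (hnonvan _ (hpe ℓ)).choose with hf
      have hker : ∀ ℓ, f ℓ ∈ RingHom.ker χ := by
        intro ℓ
        rw [hf]
        by_cases hc : ℓ = j
        · simpa [hc] using hgker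
        · simpa [hc] using (hnonvan _ (hpe ℓ)).choose_spec.1
      refine ⟨f, hker, ?_⟩
      have hfχ : ∀ ℓ, χ (f ℓ) = 0 := fun ℓ => RingHom.mem_ker.mp (hker ℓ)
      rw [qsym_sum_eq_sum_good χ n _ p f hfχ, qsym_sum_eq_sum_good χ n _ p' f hfχ,
        qsym_good_singleton χ p rfl, qsym_good_singleton χ p' h',
        Finset.sum_singleton, Finset.sum_singleton]
      have hL : (∏ ℓ : Fin S.card, (p (e ℓ)) (f ℓ)) ≠ 0 := by
        apply Finset.prod_ne_zero_iff.mpr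
        intro ℓ _
        rw [hf]
        by_cases hc : ℓ = j
        · subst hc; simpa using hg2
        · simpa [hc] using (hnonvan _ (hpe ℓ)).choose_spec.2
      have hR : (∏ ℓ : Fin S.card, (p' (e' ℓ)) (f ℓ)) = 0 := by
        apply Finset.prod_eq_zero (Finset.mem_univ j)
        rw [hf]
        simpa using hg0
      rw [hR]
      exact hL
  · obtain ⟨s, hs, f, hker, hne2⟩ := qsym_aux_lt χ hnonvan p' p h
    exact ⟨s, hs, f, hker, hne2.symm⟩
end
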